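/- arXiv:0912.2038 — 8 statements merged into one kernel-verified Lean document; each statement's English description precedes it below -/
import Mathlib

section
/- Let F be a field of characteristic p > 0 containing a primitive e-th root of unity ζ with e > 1, and let K = F(q) be the field of rational functions. For a non-zero integer l define ν_{e,p}(l) = 0 if e ∤ l, and ν_{e,p}(l) = 1 + ν_p(l/e) otherwise, where ν_p is the p-adic valuation. Suppose r ≥ 1 and (a_1,…,a_r), (b_1,…,b_r) are tuples of non-zero integers with ν_{e,p}(a_j) ≥ ν_{e,p}(b_j) for each j. Then there exist Laurent polynomials f(q), g(q) ∈ F[q, q^{-1}] with g(ζ) ≠ 0 such that (∏_{j=1}^r [a_j]_q) / (∏_{j=1}^r [b_j]_q) = f(q)/g(q) in K, where for l ∈ ℤ, [l]_q = (q^l − 1)/(q − 1) ∈ K. -/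
/-- The Gaussian integer `[l]_q = (q^l − 1)/(q − 1)` in the field of rational functions. -/
noncomputable def lgauss (F : Type*) [Field F] (l : ℤ) : RatFunc F :=
  (RatFunc.X ^ l - 1) / (RatFunc.X - 1)

/-- Embedding of a Laurent polynomial into the field of rational functions. -/
noncomputable def laurentToRatFunc {F : Type*} [Field F] (f : LaurentPolynomial F) :
    RatFunc F :=
  f.coeff.sum fun n a => RatFunc.C a * RatFunc.X ^ n

/-- Evaluation of a Laurent polynomial at an element of the field. -/
noncomputable def laurentEval {F : Type*} [Field F] (ζ : F) (f : LaurentPolynomial F) : F :=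
  f.coeff.sum fun n a => a * ζ ^ n

/-- `ν_{e,p}(l) = 0` if `e ∤ l` and `1 + ν_p(l/e)` otherwise. -/
def nuep (e p : ℕ) (l : ℤ) : ℕ :=
  if (e : ℤ) ∣ l then 1 + padicValInt p (l / e) else 0

/-!
Since `[l]_q / [l']_q = (q^l - 1) / (q^{l'} - 1)`, and up to Laurent monomials (units at `ζ`)
this is `(q^{|l|} - 1) / (q^{|l'|} - 1)`, everything reduces to counting factors `q - ζ`. In
characteristic `p` we have `q^{p^v m} - 1 = (q^m - 1)^{p^v}`, and `q^m - 1` is separable when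
`p ∤ m`; so `ζ` is a root of `q^n - 1` of multiplicity `p^{ν_p(n)}` if `e ∣ n` and `0` otherwise,
which is monotone in `ν_{e,p}(n)`. Hence each factor `[a_j]_q / [b_j]_q` is a quotient `f / g`
with `g(ζ) ≠ 0`, and such quotients are closed under products.
-/

open Polynomial

namespace LaurentPolynomial

theorem smeval_toLaurent {R S : Type*} [CommSemiring R] [Semiring S] [Algebra R S]
    (P : R[X]) (x : Sˣ) : (toLaurent P).smeval x = aeval (x : S) P := by
  induction P using Polynomial.induction_on' with
  | add P Q hP hQ => rw [map_add, smeval_add, hP, hQ, map_add]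
  | monomial n a =>
    rw [← C_mul_X_pow_eq_monomial, toLaurent_C_mul_X_pow, smeval_C_mul_T_n, zpow_natCast,
      Units.val_pow_eq_pow_val, Algebra.smul_def, map_mul, aeval_C, map_pow, aeval_X]

end LaurentPolynomial

section Laurent

variable {F : Type*} [Field F]

theorem laurentEval_toLaurent {ζ : F} (hζ : ζ ≠ 0) (P : F[X]) :
    laurentEval ζ (toLaurent P) = P.eval ζ := by
  have h : laurentEval ζ (toLaurent P) = (toLaurent P).smeval (Units.mk0 ζ hζ) := by
    refine Finsupp.sum_congr fun n _ => ?_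
    rw [Units.val_zpow_eq_zpow_val, Units.val_mk0, smul_eq_mul]
  rw [h, LaurentPolynomial.smeval_toLaurent, Units.val_mk0, coe_aeval_eq_eval]

theorem laurentToRatFunc_toLaurent (P : F[X]) :
    laurentToRatFunc (toLaurent P) = algebraMap F[X] (RatFunc F) P := by
  have h : laurentToRatFunc (toLaurent P) =
      (toLaurent P).smeval (Units.mk0 (RatFunc.X : RatFunc F) RatFunc.X_ne_zero) := by
    refine Finsupp.sum_congr fun n _ => ?_
    rw [Units.val_zpow_eq_zpow_val, Units.val_mk0, Algebra.smul_def, RatFunc.algebraMap_eq_C]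
  rw [h, LaurentPolynomial.smeval_toLaurent, Units.val_mk0, ← RatFunc.algebraMap_X,
    aeval_algebraMap_apply, aeval_X_left_apply]

end Laurent

theorem dvd_and_padicValInt_le_of_nuep_le {e p : ℕ} [Fact p.Prime] {a b : ℤ} (ha : a ≠ 0)
    (hb : b ≠ 0) (h : nuep e p b ≤ nuep e p a) (hdvd : (e : ℤ) ∣ b) :
    (e : ℤ) ∣ a ∧ padicValInt p b ≤ padicValInt p a := by
  unfold nuep at h
  rw [if_pos hdvd] at h
  split_ifs at h with hdvd'
  · obtain ⟨b', rfl⟩ := hdvd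
    obtain ⟨a', rfl⟩ := hdvd'
    have he : (e : ℤ) ≠ 0 := left_ne_zero_of_mul hb
    rw [Int.mul_ediv_cancel_left _ he, Int.mul_ediv_cancel_left _ he] at h
    refine ⟨dvd_mul_right _ _, ?_⟩
    rw [padicValInt.mul he (right_ne_zero_of_mul hb), padicValInt.mul he (right_ne_zero_of_mul ha)]
    omega
  · omega

section Multiplicity

variable {F : Type*} [Field F]

theorem rootMultiplicity_pow_eq (P : F[X]) (ζ : F) (n : ℕ) :
    rootMultiplicity ζ (P ^ n) = n * rootMultiplicity ζ P := by
  classical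
  rw [← count_roots, roots_pow, Multiset.count_nsmul, count_roots]

open Classical in
theorem rootMultiplicity_X_pow_sub_one_of_not_dvd (p : ℕ) [CharP F p] (ζ : F) {m : ℕ}
    (hm : ¬p ∣ m) : rootMultiplicity ζ (X ^ m - 1 : F[X]) = if ζ ^ m = 1 then 1 else 0 := by
  have hm' : (m : F) ≠ 0 := by rwa [Ne, CharP.cast_eq_zero_iff F p]
  have hsep : (X ^ m - 1 : F[X]).Separable := by
    simpa using separable_X_pow_sub_C (1 : F) hm' one_ne_zero
  have hne : (X ^ m - 1 : F[X]) ≠ 0 := hsep.ne_zero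
  rw [← count_roots, Multiset.count_eq_of_nodup (nodup_roots hsep)]
  simp [mem_roots hne, sub_eq_zero]

open Classical in
theorem rootMultiplicity_X_pow_sub_one (p : ℕ) [Fact p.Prime] [CharP F p] (ζ : F) {m : ℕ}
    (hm : m ≠ 0) :
    rootMultiplicity ζ (X ^ m - 1 : F[X]) = if ζ ^ m = 1 then p ^ padicValNat p m else 0 := by
  have hp : p.Prime := Fact.out
  obtain ⟨v, m', hpm', rfl⟩ := Nat.exists_eq_pow_mul_and_not_dvd hm p hp.ne_one
  have hv : padicValNat p (p ^ v * m') = v := by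
    rw [padicValNat.mul (pow_ne_zero _ hp.ne_zero) (by rintro rfl; simp at hpm'),
      padicValNat.prime_pow, padicValNat.eq_zero_of_not_dvd hpm', add_zero]
  have hfrob : (X ^ (p ^ v * m') - 1 : F[X]) = (X ^ m' - 1) ^ p ^ v := by
    rw [sub_pow_char_pow, one_pow, ← pow_mul, mul_comm]
  rw [hfrob, rootMultiplicity_pow_eq, rootMultiplicity_X_pow_sub_one_of_not_dvd p ζ hpm', hv,
    ExpChar.pow_prime_pow_mul_eq_one_iff]
  split_ifs <;> simp

theorem rootMultiplicity_X_pow_natAbs_sub_one_le {p e : ℕ} [Fact p.Prime] [CharP F p] {ζ : F}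
    (hζ : IsPrimitiveRoot ζ e) {a b : ℤ} (ha : a ≠ 0) (hb : b ≠ 0) (h : nuep e p b ≤ nuep e p a) :
    rootMultiplicity ζ (X ^ b.natAbs - 1 : F[X]) ≤ rootMultiplicity ζ (X ^ a.natAbs - 1) := by
  have hp : p.Prime := Fact.out
  rw [rootMultiplicity_X_pow_sub_one p ζ (Int.natAbs_ne_zero.2 ha),
    rootMultiplicity_X_pow_sub_one p ζ (Int.natAbs_ne_zero.2 hb)]
  split_ifs with hb1 ha1 ha1
  · rw [hζ.pow_eq_one_iff_dvd, ← Int.natCast_dvd] at hb1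
    exact Nat.pow_le_pow_right hp.pos (dvd_and_padicValInt_le_of_nuep_le ha hb h hb1).2
  · rw [hζ.pow_eq_one_iff_dvd, ← Int.natCast_dvd] at hb1 ha1
    exact absurd (dvd_and_padicValInt_le_of_nuep_le ha hb h hb1).1 ha1
  · exact Nat.zero_le _
  · exact le_rfl

end Multiplicity

section RegularAt

variable {F : Type*} [Field F] {ζ : F}

def regularAt (ζ : F) : Submonoid (RatFunc F) where
  carrier := {x | ∃ f g : F[X], g.eval ζ ≠ 0 ∧
    x = algebraMap F[X] (RatFunc F) f / algebraMap F[X] (RatFunc F) g}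
  mul_mem' := by
    rintro _ _ ⟨f, g, hg, rfl⟩ ⟨f', g', hg', rfl⟩
    exact ⟨f * f', g * g', by simp [hg, hg'], by simp only [map_mul, mul_div_mul_comm]⟩
  one_mem' := ⟨1, 1, by simp, by simp⟩

theorem algebraMap_mem_regularAt (f : F[X]) : algebraMap F[X] (RatFunc F) f ∈ regularAt ζ :=
  ⟨f, 1, by simp, by simp⟩

theorem zero_mem_regularAt : (0 : RatFunc F) ∈ regularAt ζ := by
  simpa using algebraMap_mem_regularAt (ζ := ζ) 0

theorem X_zpow_mem_regularAt (hζ : ζ ≠ 0) (n : ℤ) :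
    (RatFunc.X : RatFunc F) ^ n ∈ regularAt ζ := by
  obtain ⟨k, rfl | rfl⟩ := Int.eq_nat_or_neg n
  · simpa [RatFunc.algebraMap_X] using algebraMap_mem_regularAt (ζ := ζ) (X ^ k)
  · exact ⟨1, X ^ k, by simp [hζ], by simp [RatFunc.algebraMap_X]⟩

theorem div_mem_regularAt_of_rootMultiplicity_le {A B : F[X]}
    (h : rootMultiplicity ζ B ≤ rootMultiplicity ζ A) :
    algebraMap F[X] (RatFunc F) A / algebraMap F[X] (RatFunc F) B ∈ regularAt ζ := by
  rcases eq_or_ne B 0 with rfl | hB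
  · simpa using zero_mem_regularAt
  obtain ⟨k, hk⟩ := Nat.exists_eq_add_of_le h
  have hA := pow_mul_divByMonic_rootMultiplicity_eq A ζ
  have hB' := pow_mul_divByMonic_rootMultiplicity_eq B ζ
  set A₀ := A /ₘ (X - C ζ) ^ rootMultiplicity ζ A
  set B₀ := B /ₘ (X - C ζ) ^ rootMultiplicity ζ B
  refine ⟨(X - C ζ) ^ k * A₀, B₀, eval_divByMonic_pow_rootMultiplicity_ne_zero ζ hB, ?_⟩
  have hlin : algebraMap F[X] (RatFunc F) (X - C ζ) ≠ 0 :=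
    RatFunc.algebraMap_ne_zero (X_sub_C_ne_zero ζ)
  rw [← hA, ← hB', hk, pow_add, mul_assoc]
  simp only [map_mul, map_pow]
  exact mul_div_mul_left _ _ (pow_ne_zero _ hlin)

theorem exists_X_zpow_sub_one_eq (hζ : ζ ≠ 0) (a : ℤ) :
    ∃ u ∈ regularAt ζ, u⁻¹ ∈ regularAt ζ ∧
      RatFunc.X ^ a - 1 = u * algebraMap F[X] (RatFunc F) (X ^ a.natAbs - 1) := by
  have hneg : (-1 : RatFunc F) ∈ regularAt ζ := by
    simpa using algebraMap_mem_regularAt (ζ := ζ) (-1)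
  obtain ⟨n, rfl | rfl⟩ := Int.eq_nat_or_neg a
  · exact ⟨1, one_mem _, by simp, by simp [RatFunc.algebraMap_X]⟩
  · refine ⟨-1 * RatFunc.X ^ (-(n : ℤ)), mul_mem hneg (X_zpow_mem_regularAt hζ _), ?_, ?_⟩
    · simpa [zpow_neg] using mul_mem hneg (X_zpow_mem_regularAt hζ n)
    · have hX : (RatFunc.X : RatFunc F) ^ n ≠ 0 := pow_ne_zero _ RatFunc.X_ne_zero
      simp only [zpow_neg, zpow_natCast, neg_one_mul, Int.natAbs_neg, Int.natAbs_natCast,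
        map_sub, map_pow, RatFunc.algebraMap_X, map_one]
      field_simp
      ring

theorem lgauss_div_lgauss_mem_regularAt {p e : ℕ} [Fact p.Prime] [CharP F p]
    (hζ : IsPrimitiveRoot ζ e) (he : e ≠ 0) {a b : ℤ} (h : nuep e p b ≤ nuep e p a) :
    lgauss F a / lgauss F b ∈ regularAt ζ := by
  rcases eq_or_ne a 0 with rfl | ha
  · simpa [lgauss] using zero_mem_regularAt
  rcases eq_or_ne b 0 with rfl | hb
  · simpa [lgauss] using zero_mem_regularAt
  have hX1 : (RatFunc.X : RatFunc F) - 1 ≠ 0 := by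
    simpa [RatFunc.algebraMap_X] using RatFunc.algebraMap_ne_zero (X_sub_C_ne_zero (1 : F))
  obtain ⟨u, hu, -, hua⟩ := exists_X_zpow_sub_one_eq (hζ.ne_zero he) a
  obtain ⟨v, -, hv, hvb⟩ := exists_X_zpow_sub_one_eq (hζ.ne_zero he) b
  rw [lgauss, lgauss, div_div_div_cancel_right₀ hX1, hua, hvb, mul_div_mul_comm,
    div_eq_mul_inv u]
  exact mul_mem (mul_mem hu hv) (div_mem_regularAt_of_rootMultiplicity_le
    (rootMultiplicity_X_pow_natAbs_sub_one_le hζ ha hb h))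

end RegularAt

theorem first_divide_lemma_general (F : Type*) [Field F] (p e : ℕ) [Fact p.Prime] [CharP F p]
    (he : 1 < e) (ζ : F) (hζ : IsPrimitiveRoot ζ e)
    (r : ℕ) (a b : ℕ → ℤ)
    (hnu : ∀ j ∈ Finset.Icc 1 r, nuep e p (b j) ≤ nuep e p (a j)) :
    ∃ f g : LaurentPolynomial F, laurentEval ζ g ≠ 0 ∧
      (∏ j ∈ Finset.Icc 1 r, lgauss F (a j)) / (∏ j ∈ Finset.Icc 1 r, lgauss F (b j)) =
        laurentToRatFunc f / laurentToRatFunc g := by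
  have hmem : (∏ j ∈ Finset.Icc 1 r, lgauss F (a j)) / (∏ j ∈ Finset.Icc 1 r, lgauss F (b j)) ∈
      regularAt ζ := by
    rw [← Finset.prod_div_distrib]
    exact Submonoid.prod_mem _ fun j hj =>
      lgauss_div_lgauss_mem_regularAt hζ (by omega) (hnu j hj)
  obtain ⟨f, g, hg, hfg⟩ := hmem
  refine ⟨toLaurent f, toLaurent g, ?_, ?_⟩
  · rwa [laurentEval_toLaurent (hζ.ne_zero (by omega))]
  · rw [hfg, laurentToRatFunc_toLaurent, laurentToRatFunc_toLaurent]

/-- Lemma 3.12 ('FirstDivideLemma') of the paper. -/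
theorem first_divide_lemma (F : Type*) [Field F] (p e : ℕ) [Fact p.Prime] [CharP F p]
    (he : 1 < e) (ζ : F) (hζ : IsPrimitiveRoot ζ e)
    (r : ℕ) (hr : 1 ≤ r) (a b : ℕ → ℤ)
    (ha : ∀ j ∈ Finset.Icc 1 r, a j ≠ 0) (hb : ∀ j ∈ Finset.Icc 1 r, b j ≠ 0)
    (hnu : ∀ j ∈ Finset.Icc 1 r, nuep e p (b j) ≤ nuep e p (a j)) :
    ∃ f g : LaurentPolynomial F, laurentEval ζ g ≠ 0 ∧
      (∏ j ∈ Finset.Icc 1 r, lgauss F (a j)) / (∏ j ∈ Finset.Icc 1 r, lgauss F (b j)) =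
        laurentToRatFunc f / laurentToRatFunc g :=
  first_divide_lemma_general F p e he ζ hζ r a b hnu
end

section
/- Let F be a field of characteristic p > 0 containing a primitive e-th root of unity ζ (e > 1). Suppose a = x·e·p^k and b = y·e·p^l are positive integers with p ∤ x, p ∤ y and k ≥ l. Then in the field of rational functions F(q), the ratio [a]_q/[b]_q equals (1 + q^{ep^l} + ⋯ + q^{(xp^{k-l}−1)ep^l}) / (1 + q^{ep^l} + ⋯ + q^{(y−1)ep^l}), and the denominator polynomial does not vanish at q = ζ. -/
/-!
Put `d = e p^l`. Since `a = d · x p^(k-l)` and `b = d · y`, both `[a]_q` and `[b]_q` factor as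
`[d]_q` times a geometric sum in `q^d`, and the common factor `[d]_q ≠ 0` cancels. At `q = ζ`
every term `ζ^(d i)` of the remaining denominator is `1`, so it evaluates to `y`, which is
nonzero in `F` because `p ∤ y`.
-/

open Finset Polynomial

theorem geom_sum_range_mul {R : Type*} [Semiring R] (x : R) (m n : ℕ) :
    ∑ i ∈ range (m * n), x ^ i = (∑ i ∈ range m, x ^ i) * ∑ j ∈ range n, x ^ (m * j) := by
  induction n with
  | zero => simp
  | succ n ih =>
    rw [Nat.mul_succ, sum_range_add, ih, sum_range_succ, mul_add]
    simp only [pow_add, (Commute.pow_pow_self x _ _).eq, ← sum_mul]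

theorem Polynomial.geom_sum_X_ne_zero {R : Type*} [Semiring R] [Nontrivial R] {n : ℕ}
    (hn : n ≠ 0) : ∑ i ∈ range n, (X : R[X]) ^ i ≠ 0 := by
  obtain ⟨m, rfl⟩ := Nat.exists_eq_succ_of_ne_zero hn
  intro h
  simpa [eval_finsetSum, sum_range_succ', eval_X_pow] using congrArg (eval 0) h

theorem RatFunc.geom_sum_X_ne_zero {F : Type*} [Field F] {n : ℕ} (hn : n ≠ 0) :
    ∑ i ∈ range n, (RatFunc.X : RatFunc F) ^ i ≠ 0 := by
  simp_rw [← RatFunc.algebraMap_X, ← map_pow, ← map_sum]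
  exact (map_ne_zero_iff _ (RatFunc.algebraMap_injective F)).2 (Polynomial.geom_sum_X_ne_zero hn)

theorem Polynomial.eval_sum_X_pow_mul_of_pow_eq_one {R : Type*} [CommSemiring R] {ζ : R}
    {d : ℕ} (hζ : ζ ^ d = 1) (n : ℕ) :
    eval ζ (∑ i ∈ range n, (X : R[X]) ^ (d * i)) = n := by
  simp [eval_finsetSum, pow_mul, hζ]

theorem gaussian_ratio_step_general (F : Type*) [Field F] (p e : ℕ) [Fact p.Prime] [CharP F p]
    (he : 1 < e) (ζ : F) (hζ : IsPrimitiveRoot ζ e)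
    (x y k l a b : ℕ)
    (hpy : ¬ p ∣ y) (hkl : l ≤ k)
    (hab : a = x * e * p ^ k) (hbb : b = y * e * p ^ l) :
    (∑ i ∈ Finset.range a, (RatFunc.X : RatFunc F) ^ i) /
        (∑ i ∈ Finset.range b, (RatFunc.X : RatFunc F) ^ i) =
      (∑ i ∈ Finset.range (x * p ^ (k - l)), (RatFunc.X : RatFunc F) ^ (e * p ^ l * i)) /
        (∑ i ∈ Finset.range y, (RatFunc.X : RatFunc F) ^ (e * p ^ l * i)) ∧
    Polynomial.eval ζ
        (∑ i ∈ Finset.range y, (Polynomial.X : Polynomial F) ^ (e * p ^ l * i)) ≠ 0 := by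
  have hd : e * p ^ l ≠ 0 := mul_ne_zero (by omega) (pow_ne_zero _ (Fact.out : p.Prime).ne_zero)
  have ha : a = e * p ^ l * (x * p ^ (k - l)) := by
    rw [hab, ← Nat.pow_sub_mul_pow p hkl]
    ring
  have hb : b = e * p ^ l * y := by
    rw [hbb]
    ring
  refine ⟨?_, ?_⟩
  · rw [ha, hb, geom_sum_range_mul _ (e * p ^ l), geom_sum_range_mul _ (e * p ^ l),
      mul_div_mul_left _ _ (RatFunc.geom_sum_X_ne_zero (F := F) hd)]
  · have hζd : ζ ^ (e * p ^ l) = 1 := by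
      rw [pow_mul, hζ.pow_eq_one, one_pow]
    rw [eval_sum_X_pow_mul_of_pow_eq_one hζd, Ne, CharP.cast_eq_zero_iff F p]
    exact hpy

/-- key computational step of Lemma 3.12 of the paper. -/
theorem gaussian_ratio_step (F : Type*) [Field F] (p e : ℕ) [Fact p.Prime] [CharP F p]
    (he : 1 < e) (ζ : F) (hζ : IsPrimitiveRoot ζ e)
    (x y k l a b : ℕ) (hx : 0 < x) (hy : 0 < y)
    (hpx : ¬ p ∣ x) (hpy : ¬ p ∣ y) (hkl : l ≤ k)
    (hab : a = x * e * p ^ k) (hbb : b = y * e * p ^ l) :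
    (∑ i ∈ Finset.range a, (RatFunc.X : RatFunc F) ^ i) /
        (∑ i ∈ Finset.range b, (RatFunc.X : RatFunc F) ^ i) =
      (∑ i ∈ Finset.range (x * p ^ (k - l)), (RatFunc.X : RatFunc F) ^ (e * p ^ l * i)) /
        (∑ i ∈ Finset.range y, (RatFunc.X : RatFunc F) ^ (e * p ^ l * i)) ∧
    Polynomial.eval ζ
        (∑ i ∈ Finset.range y, (Polynomial.X : Polynomial F) ^ (e * p ^ l * i)) ≠ 0 :=
  gaussian_ratio_step_general F p e he ζ hζ x y k l a b hpy hkl hab hbb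
end

section
/- Let K, γ, m be positive integers. For an integer l write l = l*·m + l' with 0 ≤ l' < m (so l' = l mod m). Let C = −K. For 0 ≤ X ≤ γ, let M_X be the multiset {1, 2, …, X} ∪ {K, K+1, …, K+γ−X−1} and let N(X) be the number of elements of M_X divisible by m. Then N(X) = max{0, ⌈(γ − C')/m⌉} if X' < (γ+K)', and N(X) = max{0, ⌊(γ − C')/m⌋} if X' ≥ (γ+K)', where C' = (−K) mod m, X' = X mod m, and (γ+K)' = (γ+K) mod m. -/
/-!
Counting multiples of `m` in `(a, b]` as `⌊b/m⌋ - ⌊a/m⌋`, the count is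
`⌊X/m⌋ + ⌊(K+γ-X-1)/m⌋ - ⌊(K-1)/m⌋`. The first two terms add up to `⌊(γ+K)/m⌋`, minus one
exactly when `X' ≥ (γ+K)'`. Since `K + C'` is a multiple of `m`, `γ - C'` has residue `(γ+K)'`
and `⌊(γ+K)/m⌋ - ⌊(K-1)/m⌋ = ⌊(γ-C')/m⌋ + 1`, which is `⌈(γ-C')/m⌉` when `X' < (γ+K)'`, as
then `(γ+K)'` is positive.
-/

open Finset

theorem Nat.card_filter_dvd_Ioc (m : ℕ) {a b : ℕ} (hab : a ≤ b) :
    #{x ∈ Ioc a b | m ∣ x} = b / m - a / m := by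
  have hdisj : Disjoint (Ioc 0 a) (Ioc a b) := Ioc_disjoint_Ioc_of_le le_rfl
  rw [← Nat.Ioc_filter_dvd_card_eq_div b, ← Nat.Ioc_filter_dvd_card_eq_div a,
    ← Ioc_union_Ioc_eq_Ioc (Nat.zero_le a) hab, filter_union,
    card_union_of_disjoint (disjoint_filter_filter hdisj)]
  omega

namespace Int

variable {m : ℤ}

theorem ediv_add_sub_sub_one_ediv (hm : 0 < m) (x y : ℤ) :
    x / m + (y - x - 1) / m = if x % m < y % m then y / m else y / m - 1 := by
  have hx := emod_add_mul_ediv x m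
  have hy := emod_add_mul_ediv y m
  have := emod_nonneg x hm.ne'
  have := emod_nonneg y hm.ne'
  have := emod_lt_of_pos x hm
  have := emod_lt_of_pos y hm
  split_ifs with h
  · have : (y - x - 1) / m = y / m - x / m :=
      ((Int.ediv_emod_unique (r := y % m - x % m - 1) hm).2
        ⟨by linarith, by linarith, by linarith⟩).1
    omega
  · have : (y - x - 1) / m = y / m - x / m - 1 :=
      ((Int.ediv_emod_unique (r := y % m - x % m - 1 + m) hm).2
        ⟨by linarith, by linarith, by linarith⟩).1
    omega

theorem sub_one_ediv_eq_neg_neg_ediv_sub_one (hm : 0 < m) (k : ℤ) :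
    (k - 1) / m = -(-k / m) - 1 :=
  have := emod_add_mul_ediv (-k) m
  have := emod_nonneg (-k) hm.ne'
  have := emod_lt_of_pos (-k) hm
  ((Int.ediv_emod_unique (r := m - 1 - (-k) % m) hm).2 ⟨by linarith, by linarith, by linarith⟩).1

theorem sub_neg_emod_eq_add_add_mul (a k : ℤ) : a - -k % m = a + k + m * (-k / m) := by
  rw [emod_def]; ring

theorem ceil_intCast_div_natCast_of_not_dvd {n : ℤ} {d : ℕ} (hd : 0 < d) (h : ¬ (d : ℤ) ∣ n) :
    ⌈(n / d : ℚ)⌉ = n / d + 1 := by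
  rw [Rat.ceil_intCast_div_natCast, neg_ediv, if_neg h, sign_natCast_of_ne_zero hd.ne']
  ring

theorem ediv_add_ediv_sub_ediv_eq_ite (hm : 0 < m) (K γ X : ℤ) :
    X / m + ((K + γ - X - 1) / m - (K - 1) / m) =
      if X % m < (γ + K) % m then (γ - -K % m) / m + 1 else (γ - -K % m) / m := by
  have hsum := ediv_add_sub_sub_one_ediv hm X (γ + K)
  have hK := sub_one_ediv_eq_neg_neg_ediv_sub_one hm K
  have hγ : (γ - -K % m) / m = (γ + K) / m + -K / m := by
    rw [sub_neg_emod_eq_add_add_mul, add_mul_ediv_left _ _ hm.ne']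
  rw [show K + γ - X - 1 = γ + K - X - 1 by ring]
  split_ifs at hsum ⊢ <;> linarith

end Int

theorem card_filter_dvd_Icc_add_Icc (m : ℕ) {K γ X : ℕ} (hK : 0 < K) (hX : X ≤ γ) :
    ((((Icc 1 X).val + (Icc K (K + γ - X - 1)).val).filter (m ∣ ·)).card : ℤ) =
      (X : ℤ) / m + (((K : ℤ) + γ - X - 1) / m - ((K : ℤ) - 1) / m) := by
  obtain ⟨k, rfl⟩ : ∃ k, K = k + 1 := ⟨K - 1, by omega⟩
  rw [Multiset.filter_add, Multiset.card_add, ← filter_val, ← filter_val, card_val, card_val,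
    Icc_add_one_left_eq_Ioc, show 1 = 0 + 1 from rfl, Icc_add_one_left_eq_Ioc,
    Nat.Ioc_filter_dvd_card_eq_div, Nat.card_filter_dvd_Ioc m (by omega)]
  have hlast : ((k + 1 + γ - X - 1 : ℕ) : ℤ) = (k + 1 : ℤ) + γ - X - 1 := by omega
  rw [Nat.cast_add, Nat.cast_sub (Nat.div_le_div_right (by omega)), Int.natCast_div,
    Int.natCast_div, Int.natCast_div, hlast]
  push_cast
  ring_nf

theorem cm_gamma_one_general (K γ m : ℕ) (hK : 0 < K) (hm : 0 < m)
    (X : ℕ) (hX : X ≤ γ) :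
    ((((Finset.Icc 1 X).val + (Finset.Icc K (K + γ - X - 1)).val).filter
        (fun x => m ∣ x)).card : ℤ) =
      if (X : ℤ) % m < ((γ : ℤ) + K) % m then
        max 0 ⌈(((γ : ℤ) - (-(K : ℤ)) % m : ℤ) : ℚ) / (m : ℚ)⌉
      else
        max 0 ⌊(((γ : ℤ) - (-(K : ℤ)) % m : ℤ) : ℚ) / (m : ℚ)⌋ := by
  have hmz : (0 : ℤ) < m := by exact_mod_cast hm
  have hcount := card_filter_dvd_Icc_add_Icc m hK hX
  rw [Int.ediv_add_ediv_sub_ediv_eq_ite hmz] at hcount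
  have hnonneg := hcount ▸ Nat.cast_nonneg (α := ℤ) _
  split_ifs at hcount hnonneg ⊢ with hlt
  · have hndvd : ¬ (m : ℤ) ∣ γ - -K % m := by
      rw [Int.dvd_iff_emod_eq_zero, Int.sub_neg_emod_eq_add_add_mul, Int.add_mul_emod_self_left]
      have := Int.emod_nonneg (X : ℤ) hmz.ne'
      omega
    rw [Int.ceil_intCast_div_natCast_of_not_dvd hm hndvd, max_eq_right hnonneg, hcount]
  · rw [Rat.floor_intCast_div_natCast, max_eq_right hnonneg, hcount]

/-- Lemma 3.13 ('CMgamma1') of the paper, a counting lemma about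
multiples of `m` in the multiset `{1,…,X} ∪ {K,…,K+γ−X−1}`. -/
theorem cm_gamma_one (K γ m : ℕ) (hK : 0 < K) (hγ : 0 < γ) (hm : 0 < m)
    (X : ℕ) (hX : X ≤ γ) :
    ((((Finset.Icc 1 X).val + (Finset.Icc K (K + γ - X - 1)).val).filter
        (fun x => m ∣ x)).card : ℤ) =
      if (X : ℤ) % m < ((γ : ℤ) + K) % m then
        max 0 ⌈(((γ : ℤ) - (-(K : ℤ)) % m : ℤ) : ℚ) / (m : ℚ)⌉
      else
        max 0 ⌊(((γ : ℤ) - (-(K : ℤ)) % m : ℤ) : ℚ) / (m : ℚ)⌋ :=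
  cm_gamma_one_general K γ m hK hm X hX
end

section
/- Let p be a prime, e > 1 an integer, K > 0 and γ ≥ e integers. For a non-zero integer x define ν_{e,p}(x) = 0 if e ∤ x and ν_{e,p}(x) = 1 + ν_p(x/e) otherwise. For 0 ≤ X ≤ γ let M_X = {1,…,X} ∪ {K, K+1, …, K+γ−X−1} (a multiset of γ positive integers) and for i ≥ 0 let N(X)_i = #{x ∈ M_X : ν_{e,p}(x) ≥ i}. Let s be maximal with γ ≥ e·p^s, let A be minimal with A·e·p^s ≥ K, and set β = γ − A·e·p^s + K. Then 0 ≤ β ≤ γ, and for all 0 ≤ X ≤ γ and all i ≥ 0, N(β)_i ≤ N(X)_i. -/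
/-
For `x > 0` and `i ≥ 1`, `i ≤ ν_{e,p}(x)` iff `m = e p^(i-1)` divides `x` (for `i = 0` take
`m = 1`), so `N(X)_i = ⌊X/m⌋ + ⌊(K+γ-X-1)/m⌋ - ⌊(K-1)/m⌋`. With `q = A e p^s` we have
`β = K + γ - q`, and the second block of `M_β` is `[K, q-1]`.
If `m ∣ e p^s` then `m ∣ q`, and among splittings `a + b = K + γ - 1` the sum `⌊a/m⌋ + ⌊b/m⌋`
is smallest when `m ∣ b + 1`, as for `b = q - 1`.
Otherwise `m > γ ≥ β` is a multiple of `e p^s`, and by minimality of `A` the interval `[K, q-1]`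
contains no multiple of `e p^s`, so `N(β)_i = 0`.
-/

/-- `ν_{e,p}` on natural numbers: `0` if `e ∤ x`, else `1 + ν_p(x/e)`. -/
def nuepNat (e p x : ℕ) : ℕ :=
  if e ∣ x then 1 + padicValNat p (x / e) else 0

open Finset

theorem succ_le_nuepNat_iff {e p x : ℕ} (hp : p.Prime) (hx : 0 < x) (j : ℕ) :
    j + 1 ≤ nuepNat e p x ↔ e * p ^ j ∣ x := by
  have : Fact p.Prime := ⟨hp⟩
  unfold nuepNat
  split_ifs with he
  · have hxe : x / e ≠ 0 := by
      obtain ⟨c, rfl⟩ := he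
      rcases Nat.eq_zero_or_pos e with rfl | he0
      · simp at hx
      · simp [Nat.mul_div_cancel_left c he0, Nat.pos_of_mul_pos_left hx |>.ne']
    rw [← Nat.dvd_div_iff_mul_dvd he, padicValNat_dvd_iff_le hxe]
    omega
  · exact ⟨by omega, fun h => absurd (dvd_of_mul_right_dvd h) he⟩

theorem exists_dvd_iff_le_nuepNat {e p γ s : ℕ} (hp : p.Prime) (he : 0 < e)
    (hs : γ < e * p ^ (s + 1)) (i : ℕ) :
    ∃ m, 0 < m ∧ (∀ x, 0 < x → (i ≤ nuepNat e p x ↔ m ∣ x)) ∧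
      (m ∣ e * p ^ s ∨ (e * p ^ s ∣ m ∧ γ < m)) := by
  rcases i with _ | j
  · exact ⟨1, one_pos, by simp, Or.inl (one_dvd _)⟩
  refine ⟨e * p ^ j, Nat.mul_pos he (pow_pos hp.pos j),
    fun x hx => succ_le_nuepNat_iff hp hx j, ?_⟩
  rcases le_or_gt j s with hjs | hsj
  · exact Or.inl (mul_dvd_mul_left e (pow_dvd_pow p hjs))
  · refine Or.inr ⟨mul_dvd_mul_left e (pow_dvd_pow p hsj.le), hs.trans_le ?_⟩
    exact Nat.mul_le_mul_left e (Nat.pow_le_pow_right hp.pos hsj)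

namespace Nat

theorem Ioc_filter_dvd_card_eq_div_sub (a b m : ℕ) : #{x ∈ Ioc a b | m ∣ x} = b / m - a / m := by
  rcases le_total a b with hab | hba
  · have hdiff : {x ∈ Ioc a b | m ∣ x} = {x ∈ Ioc 0 b | m ∣ x} \ {x ∈ Ioc 0 a | m ∣ x} := by
      ext x
      simp only [mem_sdiff, mem_filter, mem_Ioc]
      omega
    rw [hdiff, card_sdiff_of_subset (filter_subset_filter _ (Ioc_subset_Ioc_right hab)),
      Ioc_filter_dvd_card_eq_div, Ioc_filter_dvd_card_eq_div]
  · rw [Ioc_eq_empty (by omega), filter_empty, card_empty,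
      Nat.sub_eq_zero_of_le (Nat.div_le_div_right hba)]

theorem div_add_div_le_of_dvd_succ {a b x y m : ℕ} (hm : 0 < m) (hb : m ∣ b + 1)
    (h : a + b = x + y) : a / m + b / m ≤ x / m + y / m := by
  have hab : (a + b + 1) / m = a / m + b / m + 1 := by
    rw [add_assoc, Nat.add_div_of_dvd_left hb, Nat.succ_div_of_dvd hb, add_assoc]
  have hxy : (x + y + 1) / m < x / m + y / m + 2 := by
    have := Nat.lt_div_mul_add (a := x) hm
    have := Nat.lt_div_mul_add (a := y) hm
    exact (Nat.div_lt_iff_lt_mul hm).2 (by linarith)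
  rw [h] at hab
  omega

theorem pred_div_le_pred_div_of_forall_dvd_le {K q m : ℕ} (hm : 0 < m)
    (hq : ∀ c, K ≤ c → m ∣ c → q ≤ c) : (q - 1) / m ≤ (K - 1) / m := by
  by_contra! h
  set c := ((K - 1) / m + 1) * m with hc
  have hKc : K ≤ c := by
    have := Nat.lt_div_mul_add (a := K - 1) hm
    rw [hc, add_one_mul]
    omega
  have hcq : c ≤ q - 1 := (Nat.le_div_iff_mul_le hm).1 h
  have := hq c hKc (Dvd.intro_left _ rfl)
  have : 0 < c := Nat.mul_pos (Nat.succ_pos _) hm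
  omega

end Nat

/-- The multiset `M_X` of the paper. -/
def blockMultiset (K γ X : ℕ) : Multiset ℕ :=
  (Icc 1 X).val + (Icc K (K + γ - X - 1)).val

section blockMultiset

variable {K γ X m : ℕ}

theorem pos_of_mem_blockMultiset (hK : 0 < K) {x : ℕ} (hx : x ∈ blockMultiset K γ X) :
    0 < x := by
  simp only [blockMultiset, Multiset.mem_add, Finset.mem_val, mem_Icc] at hx
  omega

theorem card_filter_dvd_blockMultiset (hK : 0 < K) (hX : X ≤ γ) :
    Multiset.card ((blockMultiset K γ X).filter (m ∣ ·)) =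
      X / m + (K + γ - X - 1) / m - (K - 1) / m := by
  have hIcc : ∀ a b, 0 < a → Icc a b = Ioc (a - 1) b := fun a b ha => by
    ext x; simp only [mem_Icc, mem_Ioc]; omega
  rw [blockMultiset, Multiset.filter_add, Multiset.card_add, ← filter_val, ← filter_val,
    card_val, card_val, hIcc 1 X one_pos, hIcc K _ hK, Nat.Ioc_filter_dvd_card_eq_div_sub,
    Nat.Ioc_filter_dvd_card_eq_div_sub]
  have hdiv : (K - 1) / m ≤ (K + γ - X - 1) / m := Nat.div_le_div_right (by omega)
  simp only [Nat.sub_self, Nat.zero_div, Nat.sub_zero]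
  exact (Nat.add_sub_assoc hdiv _).symm

theorem card_filter_dvd_blockMultiset_le {n q : ℕ} (hK : 0 < K) (hm : 0 < m) (hKq : K ≤ q)
    (hqγ : q ≤ K + γ) (hX : X ≤ γ) (hnq : n ∣ q) (hq : ∀ c, K ≤ c → n ∣ c → q ≤ c)
    (hmn : m ∣ n ∨ (n ∣ m ∧ γ < m)) :
    Multiset.card ((blockMultiset K γ (K + γ - q)).filter (m ∣ ·)) ≤
      Multiset.card ((blockMultiset K γ X).filter (m ∣ ·)) := by
  rw [card_filter_dvd_blockMultiset hK hX, card_filter_dvd_blockMultiset hK (by omega),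
    show K + γ - (K + γ - q) - 1 = q - 1 by omega]
  have hK1 : (K - 1) / m ≤ (K + γ - X - 1) / m := Nat.div_le_div_right (by omega)
  rcases hmn with hmn | ⟨hnm, hγm⟩
  · have hmq : m ∣ q - 1 + 1 := by
      rw [Nat.sub_add_cancel (by omega : 1 ≤ q)]
      exact hmn.trans hnq
    have := Nat.div_add_div_le_of_dvd_succ (a := K + γ - q) (x := X) (y := K + γ - X - 1) hm hmq
      (by omega)
    omega
  · have h0 : (K + γ - q) / m = 0 := Nat.div_eq_of_lt (by omega)
    have := Nat.pred_div_le_pred_div_of_forall_dvd_le hm fun c hc hmc => hq c hc (hnm.trans hmc)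
    omega

end blockMultiset

theorem cm_gamma_two_general (p e K γ s A : ℕ) (hp : p.Prime) (he : 1 < e)
    (hK : 0 < K)
    (hs1 : e * p ^ s ≤ γ) (hs2 : γ < e * p ^ (s + 1))
    (hA1 : K ≤ A * (e * p ^ s)) (hA2 : ∀ B, K ≤ B * (e * p ^ s) → A ≤ B) :
    ∃ β : ℕ, (β : ℤ) = (γ : ℤ) - A * (e * p ^ s) + K ∧ β ≤ γ ∧
      ∀ X ≤ γ, ∀ i : ℕ,
        (((Finset.Icc 1 β).val + (Finset.Icc K (K + γ - β - 1)).val).filter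
            (fun x => i ≤ nuepNat e p x)).card ≤
          (((Finset.Icc 1 X).val + (Finset.Icc K (K + γ - X - 1)).val).filter
            (fun x => i ≤ nuepNat e p x)).card := by
  set n := e * p ^ s
  have hq : ∀ c, K ≤ c → n ∣ c → A * n ≤ c := by
    rintro c hc ⟨B, rfl⟩
    rw [mul_comm n B] at hc ⊢
    exact Nat.mul_le_mul_right n (hA2 B hc)
  have hqK : A * n < K + n := by
    obtain ⟨B, rfl⟩ := Nat.exists_eq_add_one_of_ne_zero (by rintro rfl; omega : A ≠ 0)
    have hB : B * n < K := by
      by_contra! h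
      have := hA2 B h
      omega
    rw [add_one_mul]
    omega
  refine ⟨K + γ - A * n, by rw [Nat.cast_sub (by omega : A * n ≤ K + γ)]; push_cast [n]; ring,
    by omega, fun X hX i => ?_⟩
  obtain ⟨m, hm, hnu, hmn⟩ := exists_dvd_iff_le_nuepNat hp (by omega) hs2 i
  have hfilter : ∀ Y, (blockMultiset K γ Y).filter (fun x => i ≤ nuepNat e p x) =
      (blockMultiset K γ Y).filter (m ∣ ·) := fun Y =>
    Multiset.filter_congr fun x hx => hnu x (pos_of_mem_blockMultiset hK hx)
  change Multiset.card ((blockMultiset K γ (K + γ - A * n)).filter _) ≤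
    Multiset.card ((blockMultiset K γ X).filter _)
  rw [hfilter, hfilter]
  exact card_filter_dvd_blockMultiset_le hK hm hA1 (by omega) hX (dvd_mul_left n A) hq hmn

/-- Lemma 3.14 ('CMgamma2') of the paper. -/
theorem cm_gamma_two (p e K γ s A : ℕ) (hp : p.Prime) (he : 1 < e)
    (hK : 0 < K) (hγ : e ≤ γ)
    (hs1 : e * p ^ s ≤ γ) (hs2 : γ < e * p ^ (s + 1))
    (hA1 : K ≤ A * (e * p ^ s)) (hA2 : ∀ B, K ≤ B * (e * p ^ s) → A ≤ B) :
    ∃ β : ℕ, (β : ℤ) = (γ : ℤ) - A * (e * p ^ s) + K ∧ β ≤ γ ∧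
      ∀ X ≤ γ, ∀ i : ℕ,
        (((Finset.Icc 1 β).val + (Finset.Icc K (K + γ - β - 1)).val).filter
            (fun x => i ≤ nuepNat e p x)).card ≤
          (((Finset.Icc 1 X).val + (Finset.Icc K (K + γ - X - 1)).val).filter
            (fun x => i ≤ nuepNat e p x)).card :=
  cm_gamma_two_general p e K γ s A hp he hK hs1 hs2 hA1 hA2
end

section
/- Let p be a prime, e > 1, γ > 0, C < 0 integers. For 0 ≤ X ≤ γ let M_X be the multiset {1, 2, …, X} ∪ {C, C−1, …, C−γ+X+1}, and for i ≥ 0 let N(X)_i = #{x ∈ M_X : ν_{e,p}(x) ≥ i}, where ν_{e,p}(x) = 0 if e ∤ x and ν_{e,p}(x) = 1 + ν_p(x/e) otherwise. Then there exists β with 0 ≤ β ≤ γ such that N(β)_i ≤ N(X)_i for all 0 ≤ X ≤ γ and all i ≥ 0. -/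
/-! For `x ≠ 0` one has `i + 1 ≤ ν_{e,p}(x)` iff `e p^i ∣ x`, so only multiples of `m = e p^i`
matter. With `L = γ - C > γ`, the multiples of `m` in `M_X` are those of the window
`(X - L, X]` minus those of `(C, 0]`, and such a window contains `⌊L/m⌋` multiples of `m`, plus
one exactly when `X mod m < L mod m`. If `L mod m > γ`, every `X ≤ γ` gets the extra multiple;
otherwise `X ≡ L (mod m)` avoids it. The moduli `e p^i` form a divisibility chain, so
`β = L mod e p^J`, for the largest `J` with `L mod e p^J ≤ γ`, avoids it for all such `i` at once.
-/

open Finset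

theorem succ_le_nuep_iff {e p : ℕ} (hp : p ≠ 1) {x : ℤ} (hx : x ≠ 0) (i : ℕ) :
    i + 1 ≤ nuep e p x ↔ (e : ℤ) * p ^ i ∣ x := by
  unfold nuep
  split_ifs with he
  · have hq : x / e ≠ 0 := fun h => hx (by rw [← Int.ediv_mul_cancel he, h, zero_mul])
    rw [← Int.dvd_div_iff_mul_dvd he, padicValInt_dvd_iff_of_ne_one hp, or_iff_right hq]
    omega
  · exact ⟨by omega, fun h => absurd (dvd_of_mul_right_dvd h) he⟩

theorem Int.ediv_sub_ediv_sub (y l : ℤ) {m : ℤ} (hm : 0 < m) :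
    y / m - (y - l) / m = l / m + if y % m < l % m then 1 else 0 := by
  have hy := Int.mul_ediv_add_emod y m
  have hl := Int.mul_ediv_add_emod l m
  have := Int.emod_nonneg y hm.ne'
  have := Int.emod_nonneg l hm.ne'
  have := Int.emod_lt_of_pos y hm
  have := Int.emod_lt_of_pos l hm
  suffices (y - l) / m = y / m - l / m - if y % m < l % m then 1 else 0 by rw [this]; ring
  rw [Int.ediv_eq_iff_of_pos hm]
  split_ifs <;> constructor <;> nlinarith

theorem Int.natCast_card_filter_dvd_Ioc {a b : ℤ} (hab : a ≤ b) {m : ℕ} (hm : 0 < m) :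
    (#{x ∈ Ioc a b | (m : ℤ) ∣ x} : ℤ) = b / m - a / m := by
  rw [Int.Ioc_filter_dvd_card a b (by exact_mod_cast hm)]
  simp only [Int.cast_natCast, Rat.floor_intCast_div_natCast]
  exact max_eq_left (sub_nonneg.2 (Int.ediv_le_ediv (by exact_mod_cast hm) hab))

theorem exists_le_forall_emod_eq {m : ℕ → ℤ} (hpos : ∀ j, 0 < m j)
    (hdvd : ∀ ⦃i j⦄, i ≤ j → m i ∣ m j) {L : ℤ} {γ : ℕ} (hγL : γ < L) (hL : ∃ J, L < m J) :
    ∃ β ≤ γ, ∀ j, L % m j ≤ γ → (β : ℤ) % m j = L % m j := by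
  obtain ⟨J, hJ⟩ := hL
  have hlt : ∀ j, L % m j ≤ γ → j < J := by
    intro j hj
    by_contra! hJj
    have hLj : L < m j := hJ.trans_le (Int.le_of_dvd (hpos j) (hdvd hJj))
    rw [Int.emod_eq_of_lt (by omega) hLj] at hj
    omega
  by_cases hne : ∃ j, L % m j ≤ γ
  · obtain ⟨j, hj⟩ := hne
    set j₀ := Nat.findGreatest (fun j => L % m j ≤ γ) J
    have hj₀ : L % m j₀ ≤ γ :=
      Nat.findGreatest_spec (P := fun j => L % m j ≤ γ) (hlt j hj).le hj
    have hr : 0 ≤ L % m j₀ := Int.emod_nonneg _ (hpos _).ne'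
    refine ⟨(L % m j₀).toNat, by omega, fun j hj => ?_⟩
    rw [Int.toNat_of_nonneg hr,
      Int.emod_emod_of_dvd _ (hdvd (Nat.le_findGreatest (hlt j hj).le hj))]
  · push Not at hne
    exact ⟨0, Nat.zero_le γ, fun j hj => absurd hj (hne j).not_ge⟩

noncomputable def multisetM (γ : ℕ) (C : ℤ) (X : ℕ) : Multiset ℤ :=
  (Icc 1 X).val.map (fun x : ℕ => (x : ℤ)) + (Icc (C - γ + X + 1) C).val

section multisetM

variable {γ X : ℕ} {C : ℤ}

theorem card_multisetM (hX : X ≤ γ) : Multiset.card (multisetM γ C X) = γ := by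
  have h := Int.card_Icc (C - γ + X + 1) C
  simp only [multisetM, Multiset.card_add, Multiset.card_map, card_val, Nat.card_Icc] at h ⊢
  omega

theorem zero_notMem_multisetM (hC : C < 0) : (0 : ℤ) ∉ multisetM γ C X := by
  simp [multisetM]
  omega

theorem natCast_card_filter_dvd_multisetM (hX : X ≤ γ) {m : ℕ} (hm : 0 < m) :
    (((multisetM γ C X).filter ((m : ℤ) ∣ ·)).card : ℤ) =
      (γ - C) / m + C / m + if (X : ℤ) % m < (γ - C) % m then 1 else 0 := by
  have hnat : ((Icc 1 X).val.map (fun x : ℕ => (x : ℤ))).filter ((m : ℤ) ∣ ·) =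
      ((Ioc 0 X).filter (m ∣ ·)).val.map (fun x : ℕ => (x : ℤ)) := by
    have hIcc : Icc 1 X = Ioc 0 X := Icc_add_one_left_eq_Ioc 0 X
    rw [Multiset.filter_map, filter_val, hIcc]
    simp only [Function.comp_def, Int.natCast_dvd_natCast]
  have hint : Icc (C - γ + X + 1) C = Ioc (C - γ + X) C := Icc_add_one_left_eq_Ioc _ _
  rw [multisetM, Multiset.filter_add, Multiset.card_add, hnat, Multiset.card_map, card_val,
    Nat.Ioc_filter_dvd_card_eq_div, hint, ← filter_val, card_val, Nat.cast_add,
    Int.natCast_card_filter_dvd_Ioc (by omega) hm, Int.natCast_ediv,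
    show C - γ + X = X - (γ - C) by ring]
  have := Int.ediv_sub_ediv_sub X (γ - C) (by exact_mod_cast hm : (0 : ℤ) < m)
  linarith

theorem card_filter_dvd_multisetM_le {β : ℕ} (hβ : β ≤ γ) (hX : X ≤ γ) {m : ℕ}
    (hm : 0 < m) (hres : (γ - C) % m ≤ γ → (β : ℤ) % m = (γ - C) % m) :
    ((multisetM γ C β).filter ((m : ℤ) ∣ ·)).card ≤
      ((multisetM γ C X).filter ((m : ℤ) ∣ ·)).card := by
  rw [← Nat.cast_le (α := ℤ), natCast_card_filter_dvd_multisetM hβ hm,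
    natCast_card_filter_dvd_multisetM hX hm, add_le_add_iff_left]
  by_cases h : (γ - C) % m ≤ γ
  · rw [hres h]
    simp only [lt_self_iff_false, if_false]
    split_ifs <;> omega
  · have hmod : ∀ Y : ℕ, Y ≤ γ → (Y : ℤ) % m < (γ - C) % m := fun Y hY => by
      have := Nat.mod_le Y m
      rw [← Int.natCast_mod]
      omega
    rw [if_pos (hmod β hβ), if_pos (hmod X hX)]

theorem filter_succ_le_nuep_multisetM {e p : ℕ} (hp : p ≠ 1) (hC : C < 0) (i : ℕ) :
    (multisetM γ C X).filter (fun x => i + 1 ≤ nuep e p x) =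
      (multisetM γ C X).filter (((e * p ^ i : ℕ) : ℤ) ∣ ·) :=
  Multiset.filter_congr fun x hx => by
    rw [succ_le_nuep_iff hp (ne_of_mem_of_not_mem hx (zero_notMem_multisetM hC))]
    push_cast
    rfl

end multisetM

theorem cm_gamma_three_general (p e : ℕ) (hp : p.Prime) (he : 1 < e)
    (γ : ℕ) (C : ℤ) (hC : C < 0) :
    ∃ β ≤ γ, ∀ X ≤ γ, ∀ i : ℕ,
      ((((Finset.Icc 1 β).val.map (fun x : ℕ => (x : ℤ))) +
          (Finset.Icc (C - γ + β + 1) C).val).filter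
          (fun x => i ≤ nuep e p x)).card ≤
        ((((Finset.Icc 1 X).val.map (fun x : ℕ => (x : ℤ))) +
          (Finset.Icc (C - γ + X + 1) C).val).filter
          (fun x => i ≤ nuep e p x)).card := by
  have hm : ∀ j, 0 < e * p ^ j := fun j => by have := hp.pos; positivity
  have hunbounded : (γ - C) < ((e * p ^ (γ - C).toNat : ℕ) : ℤ) := by
    have := Nat.lt_pow_self hp.one_lt (n := (γ - C).toNat)
    have := Nat.le_mul_of_pos_left (p ^ (γ - C).toNat) (by omega : 0 < e)
    omega
  obtain ⟨β, hβγ, hβ⟩ := exists_le_forall_emod_eq (m := fun j => ((e * p ^ j : ℕ) : ℤ))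
    (L := γ - C) (γ := γ) (fun j => by exact_mod_cast hm j)
    (fun i j hij => by exact_mod_cast mul_dvd_mul_left e (pow_dvd_pow p hij)) (by omega)
    ⟨_, hunbounded⟩
  refine ⟨β, hβγ, fun X hX i => ?_⟩
  change ((multisetM γ C β).filter _).card ≤ ((multisetM γ C X).filter _).card
  cases i with
  | zero =>
    simp only [Multiset.filter_eq_self.2 fun _ _ => Nat.zero_le _, card_multisetM hβγ,
      card_multisetM hX, le_refl]
  | succ j =>
    rw [filter_succ_le_nuep_multisetM hp.ne_one hC, filter_succ_le_nuep_multisetM hp.ne_one hC]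
    exact card_filter_dvd_multisetM_le hβγ hX (hm j) (hβ j)

/-- Corollary 3.15 of the paper. -/
theorem cm_gamma_three (p e : ℕ) (hp : p.Prime) (he : 1 < e)
    (γ : ℕ) (hγ : 0 < γ) (C : ℤ) (hC : C < 0) :
    ∃ β ≤ γ, ∀ X ≤ γ, ∀ i : ℕ,
      ((((Finset.Icc 1 β).val.map (fun x : ℕ => (x : ℤ))) +
          (Finset.Icc (C - γ + β + 1) C).val).filter
          (fun x => i ≤ nuep e p x)).card ≤
        ((((Finset.Icc 1 X).val.map (fun x : ℕ => (x : ℤ))) +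
          (Finset.Icc (C - γ + X + 1) C).val).filter
          (fun x => i ≤ nuep e p x)).card :=
  cm_gamma_three_general p e hp he γ C hC
end

section
/- Let S_n be the symmetric group and let T_w (w ∈ S_n) be the standard basis of the generic Iwahori-Hecke algebra H_n over ℤ[q, q^{-1}]. Fix 1 ≤ u ≤ v ≤ n and π ∈ S_n, and let T_{u,v} = T_u T_{u+1} ⋯ T_{v−1}. Let D(u,v,π) be the set of tuples p = (p_0, p_1, …, p_ε) with u − 1 = p_0 < p_1 < ⋯ < p_ε = v and π(p_1) > π(p_2) > ⋯ > π(p_ε). For each such p, let p̌ be the permutation (p_1, p_1−1, …, p_0+1)(p_2, p_2−1, …, p_1+1) ⋯ (p_ε, p_ε−1, …, p_{ε−1}+1), set ℓ(p) = ε − 1, and b(p) = ∑_{i=0}^{ε−1} #{j : p_i < j < p_{i+1} and π(j) > π(p_{i+1})}. Then T_{u,v} T_π = ∑_{p ∈ D(u,v,π)} q^{b(p)} (q − 1)^{ℓ(p)} T_{p̌ π}. -/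
/-!
Induction on `v − u`, peeling `T_u` off the left of `T_{u,v}`. For a tuple `p` of
`D(u+1, v, π)` the permutation `w = p̌π` sends `u ↦ π(u)` and `u+1 ↦ π(p₁)`, so the Hecke
rule for `T_u T_w` turns on `π(u)` versus `π(p₁)`. If `π(u) < π(p₁)` then `T_u T_w = T_{s_u w}`,
and `s_u w` is the permutation of the same tuple restarted at `p₀ = u − 1`. Otherwise
`T_u T_w = q T_{s_u w} + (q − 1) T_w`: the first term is again the restarted tuple, in which
`j = u` now contributes to `b(p)`, and the second is the tuple with `u` inserted as its new
`p₁`, which lies in `D(u, v, π)` exactly because `π(u) > π(p₁)`. Each tuple of `D(u, v, π)`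
arises once in this way.
-/

/-- The cycle `(a, a−1, …, b)` (mapping `x ↦ x−1` for `b < x ≤ a` and `b ↦ a`),
written as a product of adjacent transpositions; the identity if `a ≤ b`. -/
def cyc (b a : ℕ) : Equiv.Perm ℕ :=
  (((List.range' b (a - b)).reverse).map (fun i => Equiv.swap i (i + 1))).prod

/-- The predecessor of `x` in `A`, with default `u - 1`. -/
def prevIn (u : ℕ) (A : Finset ℕ) (x : ℕ) : ℕ :=
  ((A.filter (· < x)).max).unbotD (u - 1)

/-- The permutation `p̌` associated to the tuple `u−1 = p₀ < p₁ < ⋯ < p_ε = v`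
whose nonempty part is recorded by the finset `A = {p₁, …, p_ε}`:
`p̌ = (p₁,…,p₀+1)(p₂,…,p₁+1)⋯(p_ε,…,p_{ε−1}+1)` (a product of disjoint cycles). -/
def pcheck (u : ℕ) (A : Finset ℕ) : Equiv.Perm ℕ :=
  ((A.sort (· ≤ ·)).map (fun x => cyc (prevIn u A x + 1) x)).prod

/-- `b(p) = ∑_i #{j : p_i < j < p_{i+1} and π(j) > π(p_{i+1})}`. -/
def bval (u : ℕ) (π : Equiv.Perm ℕ) (A : Finset ℕ) : ℕ :=
  ∑ x ∈ A, ((Finset.Ioo (prevIn u A x) x).filter (fun j => π x < π j)).card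

open Finset Equiv

lemma Equiv.Perm.list_prod_apply_eq_self {α : Type*} {l : List (Perm α)} {x : α}
    (h : ∀ f ∈ l, f x = x) : l.prod x = x :=
  (MulAction.stabilizer (Perm α) x).list_prod_mem h

lemma cyc_of_le {b a : ℕ} (h : a ≤ b) : cyc b a = 1 := by
  simp [cyc, Nat.sub_eq_zero_of_le h]

lemma cyc_apply_of_lt_or_lt {b a x : ℕ} (h : x < b ∨ a < x) : cyc b a x = x :=
  Perm.list_prod_apply_eq_self fun f hf => by
    obtain ⟨i, hi, rfl⟩ := List.mem_map.1 hf
    rw [List.mem_reverse, List.mem_range'_1] at hi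
    exact swap_apply_of_ne_of_ne (by omega) (by omega)

lemma cyc_eq_cyc_succ_mul_swap {b a : ℕ} (h : b < a) :
    cyc b a = cyc (b + 1) a * swap b (b + 1) := by
  obtain ⟨k, hk⟩ : ∃ k, a - b = k + 1 := ⟨a - b - 1, by omega⟩
  rw [cyc, cyc, hk, show a - (b + 1) = k by omega, List.range'_succ]
  simp

lemma cyc_apply_self {b a : ℕ} (h : b ≤ a) : cyc b a b = a := by
  induction h using Nat.decreasingInduction with
  | self => rw [cyc_of_le le_rfl]; rfl
  | of_succ b hb ih => rw [cyc_eq_cyc_succ_mul_swap hb, Perm.mul_apply, swap_apply_left, ih]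

lemma prevIn_of_forall_le {u x : ℕ} {A : Finset ℕ} (h : ∀ a ∈ A, x ≤ a) :
    prevIn u A x = u - 1 := by
  rw [prevIn, filter_eq_empty_iff.2 fun a ha => not_lt.2 (h a ha)]
  rfl

lemma prevIn_insert_of_lt {u m x : ℕ} {B : Finset ℕ} (hx : m < x) (hB : ∀ b ∈ B, m < b) :
    prevIn u (insert m B) x = prevIn (m + 1) B x := by
  rw [prevIn, prevIn, filter_insert, if_pos hx, max_insert]
  cases hM : (B.filter (· < x)).max with
  | bot => simp
  | coe a =>
    have hma : m ≤ a := (hB a (mem_filter.1 (mem_of_max hM)).1).le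
    simp [hma]

@[simp]
lemma pcheck_empty (u : ℕ) : pcheck u ∅ = 1 := by
  simp [pcheck]

lemma pcheck_insert {u m : ℕ} {B : Finset ℕ} (hu : 1 ≤ u) (hB : ∀ b ∈ B, m < b) :
    pcheck u (insert m B) = cyc u m * pcheck (m + 1) B := by
  rw [pcheck, sort_insert _ (fun b hb => (hB b hb).le) (fun h => lt_irrefl m (hB m h)),
    List.map_cons, List.prod_cons, prevIn_of_forall_le, Nat.sub_add_cancel hu, pcheck]
  · congr 2
    refine List.map_congr_left fun x hx => ?_
    rw [prevIn_insert_of_lt (hB x ((mem_sort _).1 hx)) hB]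
  · simp only [mem_insert, forall_eq_or_imp, le_refl, true_and]
    exact fun b hb => (hB b hb).le

lemma pcheck_apply_of_lt {u t : ℕ} {A : Finset ℕ} (ht : t < u) (hA : ∀ a ∈ A, u ≤ a) :
    pcheck u A t = t := by
  induction A using Finset.induction_on_min generalizing u with
  | empty => simp
  | insert m B hB ih =>
    have hum : u ≤ m := hA m (mem_insert_self m B)
    rw [pcheck_insert (by omega) hB, Perm.mul_apply, ih (by omega) fun b hb => hB b hb,
      cyc_apply_of_lt_or_lt (Or.inl ht)]

lemma bval_insert {u m : ℕ} {π : Perm ℕ} {B : Finset ℕ} (hB : ∀ b ∈ B, m < b) :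
    bval u π (insert m B) = #{j ∈ Ioo (u - 1) m | π m < π j} + bval (m + 1) π B := by
  rw [bval, sum_insert (fun h => lt_irrefl m (hB m h)), prevIn_of_forall_le, bval]
  · congr 1
    exact sum_congr rfl fun x hx => by rw [prevIn_insert_of_lt (hB x hx) hB]
  · simp only [mem_insert, forall_eq_or_imp, le_refl, true_and]
    exact fun b hb => (hB b hb).le

section Step

variable {u m : ℕ} {B : Finset ℕ}

lemma pcheck_insert_self {A : Finset ℕ} (hu : 1 ≤ u) (hA : ∀ a ∈ A, u < a) :
    pcheck u (insert u A) = pcheck (u + 1) A := by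
  rw [pcheck_insert hu hA, cyc_of_le le_rfl, one_mul]

lemma bval_insert_self {π : Perm ℕ} {A : Finset ℕ} (hA : ∀ a ∈ A, u < a) :
    bval u π (insert u A) = bval (u + 1) π A := by
  have hIoo : Ioo (u - 1) u = ∅ := by ext; simp; omega
  rw [bval_insert hA, hIoo, filter_empty, card_empty, zero_add]

lemma pcheck_eq_pcheck_succ_mul_swap (hu : 1 ≤ u) (hum : u < m) (hB : ∀ b ∈ B, m < b) :
    pcheck u (insert m B) = pcheck (u + 1) (insert m B) * swap u (u + 1) := by
  have hfix : ∀ t ≤ u + 1, pcheck (m + 1) B t = t := fun t ht =>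
    pcheck_apply_of_lt (by omega) hB
  rw [pcheck_insert hu hB, pcheck_insert (by omega) hB, cyc_eq_cyc_succ_mul_swap hum, mul_assoc,
    mul_assoc, mul_swap_eq_swap_mul, hfix u (by omega), hfix (u + 1) le_rfl]

lemma pcheck_succ_apply_self (hum : u < m) (hB : ∀ b ∈ B, m < b) :
    pcheck (u + 1) (insert m B) (u + 1) = m := by
  rw [pcheck_insert (by omega) hB, Perm.mul_apply, pcheck_apply_of_lt (by omega) hB,
    cyc_apply_self hum]

lemma bval_eq_bval_succ_add {π : Perm ℕ} (hu : 1 ≤ u) (hum : u < m) (hB : ∀ b ∈ B, m < b) :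
    bval u π (insert m B) = bval (u + 1) π (insert m B) + if π m < π u then 1 else 0 := by
  have hIoo : Ioo (u - 1) m = insert u (Ioo u m) := by ext; simp; omega
  rw [bval_insert hB, bval_insert hB, hIoo, filter_insert, Nat.add_sub_cancel]
  split_ifs
  · rw [card_insert_of_notMem (by simp)]
    omega
  · simp

end Step

lemma strictAntiOn_insert_of_forall_lt {α β : Type*} [Preorder α] [Preorder β] {f : α → β}
    {a : α} {s : Set α} (ha : ∀ b ∈ s, a < b) :
    StrictAntiOn f (insert a s) ↔ StrictAntiOn f s ∧ ∀ b ∈ s, f b < f a := by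
  refine ⟨fun h => ⟨h.mono (Set.subset_insert a s), fun b hb =>
    h (Set.mem_insert a s) (Set.mem_insert_of_mem a hb) (ha b hb)⟩, fun ⟨h, hlt⟩ => ?_⟩
  rintro x (rfl | hx) y (rfl | hy) hxy
  · exact absurd hxy (lt_irrefl _)
  · exact hlt y hy
  · exact absurd ((ha x hx).trans hxy) (lt_irrefl _)
  · exact h hx hy hxy

/-- The set `D(u, v, π)`, each tuple recorded by `S = {p₁, …, p_{ε−1}}`. -/
def cycleTuples (π : Perm ℕ) (u v : ℕ) : Finset (Finset ℕ) :=
  (Ioo (u - 1) v).powerset.filter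
    (fun S : Finset ℕ => ∀ x ∈ insert v S, ∀ y ∈ insert v S, x < y → π y < π x)

lemma cycleTuples_self (π : Perm ℕ) (v : ℕ) : cycleTuples π v v = {∅} := by
  have hIoo : Ioo (v - 1) v = ∅ := by ext; simp; omega
  rw [cycleTuples, hIoo, powerset_empty, filter_singleton, if_pos]
  simp

lemma sum_cycleTuples {M : Type*} [AddCommMonoid M] (f : Finset ℕ → M) {π : Perm ℕ} {u v : ℕ}
    (hu : 1 ≤ u) (huv : u < v) :
    ∑ S ∈ cycleTuples π u v, f S =
      ∑ S ∈ cycleTuples π (u + 1) v, f S +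
        ∑ S ∈ (cycleTuples π (u + 1) v).filter (fun S : Finset ℕ => ∀ y ∈ insert v S, π y < π u),
          f (insert u S) := by
  have hIoo : Ioo (u - 1) v = insert u (Ioo u v) := by ext; simp; omega
  have hu_notMem : ∀ S ∈ (Ioo u v).powerset, u ∉ S := fun S hS h => by
    simpa using mem_powerset.1 hS h
  rw [cycleTuples, hIoo, powerset_insert, filter_union, sum_union, filter_image, sum_image,
    cycleTuples, Nat.add_sub_cancel, filter_filter]
  · congr 2
    refine filter_congr fun S hS => ?_
    have hgt : ∀ b ∈ (insert v S : Set ℕ), u < b := by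
      simp only [Set.mem_insert_iff, mem_coe]
      rintro b (rfl | hb)
      · exact huv
      · simpa using (mem_Ioo.1 (mem_powerset.1 hS hb)).1
    rw [insert_comm]
    exact_mod_cast strictAntiOn_insert_of_forall_lt (f := π) hgt
  · intro S hS S' hS' h
    rw [← erase_insert (hu_notMem S (mem_filter.1 hS).1), h,
      erase_insert (hu_notMem S' (mem_filter.1 hS').1)]
  · refine disjoint_left.2 fun S hS hS' => ?_
    obtain ⟨S', hS', rfl⟩ := mem_image.1 (mem_filter.1 hS').1
    exact hu_notMem _ (mem_filter.1 hS).1 (mem_insert_self u S')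

section Hecke

variable {R H : Type*} [CommRing R] [Ring H] [Algebra R H]

def HeckeMulRule (q : Rˣ) (n : ℕ) (T : Perm ℕ → H) : Prop :=
  ∀ (i : ℕ) (w : Perm ℕ), 1 ≤ i → i < n →
    T (swap i (i + 1)) * T w =
      if w i < w (i + 1) then T (w * swap i (i + 1))
      else (q : R) • T (w * swap i (i + 1)) + ((q : R) - 1) • T w

/-- The summand `q^{b(p)} (q − 1)^{ℓ(p)} T_{p̌ π}` of the tuple with `A = {p₁, …, p_ε}`. -/
def heckeTerm (q : Rˣ) (T : Perm ℕ → H) (π : Perm ℕ) (u : ℕ) (A : Finset ℕ) : H :=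
  ((q : R) ^ bval u π A * ((q : R) - 1) ^ (#A - 1)) • T (π * pcheck u A)

variable {q : Rˣ} {n : ℕ} {T : Perm ℕ → H} {π : Perm ℕ}

lemma T_swap_mul_heckeTerm (hT : HeckeMulRule q n T) {u m : ℕ} {B : Finset ℕ} (hu : 1 ≤ u)
    (hun : u < n) (hum : u < m) (hB : ∀ b ∈ B, m < b) :
    T (swap u (u + 1)) * heckeTerm q T π (u + 1) (insert m B) =
      heckeTerm q T π u (insert m B) +
        if π m < π u then heckeTerm q T π u (insert u (insert m B)) else 0 := by
  set A := insert m B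
  have hA : ∀ a ∈ A, u < a := by
    simp only [A, mem_insert, forall_eq_or_imp]
    exact ⟨hum, fun b hb => hum.trans (hB b hb)⟩
  have hw_left : (π * pcheck (u + 1) A) u = π u := by
    rw [Perm.mul_apply, pcheck_apply_of_lt (Nat.lt_succ_self u) hA]
  have hw_right : (π * pcheck (u + 1) A) (u + 1) = π m := by
    rw [Perm.mul_apply, pcheck_succ_apply_self hum hB]
  have hcard : #(insert u A) - 1 = (#A - 1) + 1 := by
    rw [card_insert_of_notMem fun h => lt_irrefl u (hA u h)]
    have : 0 < #A := card_pos.2 (insert_nonempty m B)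
    omega
  rw [heckeTerm, mul_smul_comm, hT u _ hu hun, hw_left, hw_right, heckeTerm, heckeTerm,
    bval_eq_bval_succ_add hu hum hB, pcheck_eq_pcheck_succ_mul_swap hu hum hB, mul_assoc,
    pcheck_insert_self hu hA, bval_insert_self hA, hcard]
  have hne : π u ≠ π m := fun h => (π.injective h ▸ hum).false
  split_ifs with h₁ h₂ h₂
  · exact absurd (h₁.trans h₂) (lt_irrefl _)
  · simp [A]
  · module
  · exact absurd (lt_of_le_of_ne (not_lt.1 h₁) hne.symm) h₂

lemma T_swap_mul_heckeTerm_of_mem (hT : HeckeMulRule q n T) {u v : ℕ} (hu : 1 ≤ u)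
    (huv : u < v) (hv : v ≤ n) {S : Finset ℕ} (hS : S ∈ cycleTuples π (u + 1) v) :
    T (swap u (u + 1)) * heckeTerm q T π (u + 1) (insert v S) =
      heckeTerm q T π u (insert v S) +
        if ∀ y ∈ insert v S, π y < π u then heckeTerm q T π u (insert v (insert u S)) else 0 := by
  obtain ⟨hSsub, hanti⟩ := mem_filter.1 hS
  have hgt : ∀ a ∈ insert v S, u < a := by
    simp only [mem_insert, forall_eq_or_imp]
    exact ⟨huv, fun b hb => by simpa using (mem_Ioo.1 (mem_powerset.1 hSsub hb)).1⟩
  have hne : (insert v S).Nonempty := insert_nonempty v S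
  rw [insert_comm v u]
  generalize insert v S = A at hanti hgt hne ⊢
  obtain ⟨m, B, rfl, hB⟩ : ∃ m B, A = insert m B ∧ ∀ b ∈ B, m < b :=
    ⟨A.min' hne, A.erase (A.min' hne), (insert_erase (min'_mem A hne)).symm, fun b hb =>
      lt_of_le_of_ne (min'_le A b (mem_of_mem_erase hb)) (ne_of_mem_erase hb).symm⟩
  have hcond : (∀ y ∈ insert m B, π y < π u) ↔ π m < π u := by
    refine ⟨fun h => h m (mem_insert_self m B), fun h y hy => ?_⟩
    rcases mem_insert.1 hy with rfl | hy
    · exact h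
    · exact (hanti m (mem_insert_self m B) y (mem_insert_of_mem hy) (hB y hy)).trans h
  rw [if_congr hcond rfl rfl]
  exact T_swap_mul_heckeTerm hT hu (by omega) (hgt m (mem_insert_self m B)) hB

lemma heckeTerm_singleton {v : ℕ} (hv : 1 ≤ v) : heckeTerm q T π v {v} = T π := by
  have hIoo : Ioo (v - 1) v = ∅ := by ext; simp; omega
  rw [heckeTerm, ← insert_empty, pcheck_insert hv (by simp), bval_insert (by simp), hIoo,
    cyc_of_le le_rfl]
  simp [bval]

theorem prod_T_swap_mul_T (hT : HeckeMulRule q n T) (π : Perm ℕ) {u v : ℕ} (hu : 1 ≤ u)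
    (huv : u ≤ v) (hv : v ≤ n) :
    ((List.range' u (v - u)).map fun y => T (swap y (y + 1))).prod * T π =
      ∑ S ∈ cycleTuples π u v, heckeTerm q T π u (insert v S) := by
  induction huv using Nat.decreasingInduction with
  | self =>
    rw [Nat.sub_self, List.range'_zero, List.map_nil, List.prod_nil, one_mul, cycleTuples_self,
      sum_singleton, insert_empty, heckeTerm_singleton hu]
  | of_succ u huv ih =>
    obtain ⟨k, hk⟩ : ∃ k, v - u = k + 1 := ⟨v - u - 1, by omega⟩
    rw [hk, List.range'_succ, show k = v - (u + 1) by omega, List.map_cons, List.prod_cons,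
      mul_assoc, ih (by omega), mul_sum, sum_cycleTuples _ hu huv, sum_filter, ← sum_add_distrib]
    exact sum_congr rfl fun S hS => T_swap_mul_heckeTerm_of_mem hT hu huv hv hS

end Hecke

/-- The Hecke algebra basis
`T w` (for `w` in the symmetric group, acting on the right as in the paper, so that
the paper's product `στ` corresponds to `τ * σ` in `Equiv.Perm`) is axiomatized by the
multiplication rule `T_i T_w = T_{s_i w}` if `ℓ(s_i w) > ℓ(w)` (i.e. `(i)w < (i+1)w`)
and `T_i T_w = q T_{s_i w} + (q−1) T_w` otherwise.  A tuple
`p = (u−1 = p₀ < p₁ < ⋯ < p_ε = v)` with `π(p₁) > ⋯ > π(p_ε)` is encoded by the set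
`S = {p₁,…,p_{ε−1}} ⊆ (u−1, v)`, so `A = insert v S = {p₁,…,p_ε}`. -/
theorem cycle_perm_general (R : Type*) [CommRing R] (H : Type*) [Ring H] [Algebra R H]
    (q : Rˣ) (n : ℕ) (T : Equiv.Perm ℕ → H)
    (hTmul : ∀ (i : ℕ) (w : Equiv.Perm ℕ), 1 ≤ i → i < n →
      T (Equiv.swap i (i + 1)) * T w =
        if w i < w (i + 1) then T (w * Equiv.swap i (i + 1))
        else (q : R) • T (w * Equiv.swap i (i + 1)) + ((q : R) - 1) • T w)
    (π : Equiv.Perm ℕ)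
    (u v : ℕ) (hu : 1 ≤ u) (huv : u ≤ v) (hv : v ≤ n) :
    (((List.range' u (v - u)).map (fun y => T (Equiv.swap y (y + 1)))).prod) * T π =
      ∑ S ∈ (Finset.Ioo (u - 1) v).powerset.filter
          (fun S : Finset ℕ => ∀ x ∈ insert v S, ∀ y ∈ insert v S, x < y → π y < π x),
        ((q : R) ^ (bval u π (insert v S)) * ((q : R) - 1) ^ ((insert v S).card - 1)) •
          T (π * pcheck u (insert v S)) :=
  prod_T_swap_mul_T hTmul π hu huv hv

/-- Lemma 3.8 ('CyclePerm') of the paper.  Here the Hecke algebra basis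
`T w` (for `w` in the symmetric group, acting on the right as in the paper, so that
the paper's product `στ` corresponds to `τ * σ` in `Equiv.Perm`) is axiomatized by the
multiplication rule `T_i T_w = T_{s_i w}` if `ℓ(s_i w) > ℓ(w)` (i.e. `(i)w < (i+1)w`)
and `T_i T_w = q T_{s_i w} + (q−1) T_w` otherwise.  A tuple
`p = (u−1 = p₀ < p₁ < ⋯ < p_ε = v)` with `π(p₁) > ⋯ > π(p_ε)` is encoded by the set
`S = {p₁,…,p_{ε−1}} ⊆ (u−1, v)`, so `A = insert v S = {p₁,…,p_ε}`. -/
theorem cycle_perm (R : Type*) [CommRing R] (H : Type*) [Ring H] [Algebra R H]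
    (q : Rˣ) (n : ℕ) (T : Equiv.Perm ℕ → H)
    (hTmul : ∀ (i : ℕ) (w : Equiv.Perm ℕ), 1 ≤ i → i < n →
      T (Equiv.swap i (i + 1)) * T w =
        if w i < w (i + 1) then T (w * Equiv.swap i (i + 1))
        else (q : R) • T (w * Equiv.swap i (i + 1)) + ((q : R) - 1) • T w)
    (π : Equiv.Perm ℕ) (hπ : ∀ x, x < 1 ∨ n < x → π x = x)
    (u v : ℕ) (hu : 1 ≤ u) (huv : u ≤ v) (hv : v ≤ n) :
    (((List.range' u (v - u)).map (fun y => T (Equiv.swap y (y + 1)))).prod) * T π =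
      ∑ S ∈ (Finset.Ioo (u - 1) v).powerset.filter
          (fun S : Finset ℕ => ∀ x ∈ insert v S, ∀ y ∈ insert v S, x < y → π y < π x),
        ((q : R) ^ (bval u π (insert v S)) * ((q : R) - 1) ^ ((insert v S).card - 1)) •
          T (π * pcheck u (insert v S)) :=
  cycle_perm_general R H q n T hTmul π u v hu huv hv
end

section
/- Let λ and μ be partitions of n and let γ > 0, a < z be such that μ_a = λ_a + γ, μ_z = λ_z − γ, and μ_i = λ_i for i ∉ {a, z} (so μ is a partition). Fix p ≥ 0 and e > 1. Suppose σ is a partition of n with a < y < z such that (λ, σ) is an (e,p)-Carter-Payne pair with parameters (a, y, γ) and (σ, μ) is an (e,p)-Carter-Payne pair with parameters (y, z, γ). If additionally both pairs are separated (λ_r − λ_{r+1} ≥ γ for a < r ≤ y, and σ_r − σ_{r+1} ≥ γ for y < r ≤ z), then (λ, μ) is a separated (e,p)-Carter-Payne pair with parameters (a, z, γ). -/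
/-- `ℓ_p(k)`: the smallest positive integer with `p^(ℓ_p(k)) > k` (for `p ≥ 2`). -/
def lpExp (p k : ℕ) : ℕ := Nat.log p k + 1

/-- The divisibility condition in the definition of an `(e,p)`-Carter-Payne pair:
with `h = λ_a − λ_z + z − a + γ`, if `p = 0` then `γ < e` and `e ∣ h`; if `p > 0` then
`e·p^(ℓ_p(⌊γ/e⌋)) ∣ h`. -/
def CarterPayneDiv (e p : ℕ) (lam : ℕ → ℕ) (a z γ : ℕ) : Prop :=
  if p = 0 then
    γ < e ∧ (e : ℤ) ∣ ((lam a : ℤ) - lam z + z - a + γ)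
  else
    ((e : ℤ) * (p : ℤ) ^ lpExp p (γ / e)) ∣ ((lam a : ℤ) - lam z + z - a + γ)

/-- `(λ, μ)` is an `(e,p)`-Carter-Payne pair with parameters `(a, z, γ)`. -/
def IsCarterPaynePair (e p : ℕ) (lam mu : ℕ → ℕ) (a z γ : ℕ) : Prop :=
  1 < e ∧ 0 < γ ∧ 0 < a ∧ a < z ∧
    mu a = lam a + γ ∧ mu z + γ = lam z ∧
    (∀ i, i ≠ a → i ≠ z → mu i = lam i) ∧
    CarterPayneDiv e p lam a z γ

/-- Separatedness: `λ_r − λ_{r+1} ≥ γ` for `a < r ≤ z`. -/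
def IsSeparated (lam : ℕ → ℕ) (a z γ : ℕ) : Prop :=
  ∀ r, a < r → r ≤ z → lam (r + 1) + γ ≤ lam r

/-!
The quantity `h = λ_a − λ_z + z − a + γ` is additive along the composite: since `σ_y = λ_y − γ`
and `σ_z = λ_z`, the `h` of `(λ, μ)` is the sum of the `h`s of `(λ, σ)` and `(σ, μ)`. The modulus
in the divisibility condition depends only on `e`, `p` and `γ`, so it divides the sum. Beyond `y`
the partitions `σ` and `λ` agree, so separatedness of `σ` on `(y, z]` is separatedness of `λ` there.
-/

/-- The integer `h` of `CarterPayneDiv`. -/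
def carterPayneHook (lam : ℕ → ℕ) (a z γ : ℕ) : ℤ :=
  (lam a : ℤ) - lam z + z - a + γ

theorem carterPayneHook_trans {lam sigma : ℕ → ℕ} {a y z γ : ℕ}
    (hy : sigma y + γ = lam y) (hz : sigma z = lam z) :
    carterPayneHook lam a z γ = carterPayneHook lam a y γ + carterPayneHook sigma y z γ := by
  unfold carterPayneHook
  push_cast [← hz, ← hy]
  ring

theorem CarterPayneDiv.of_hook_eq_add {e p : ℕ} {lam sigma : ℕ → ℕ} {a y z γ : ℕ}
    (h₁ : CarterPayneDiv e p lam a y γ) (h₂ : CarterPayneDiv e p sigma y z γ)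
    (hadd : carterPayneHook lam a z γ =
      carterPayneHook lam a y γ + carterPayneHook sigma y z γ) :
    CarterPayneDiv e p lam a z γ := by
  unfold CarterPayneDiv at *
  unfold carterPayneHook at hadd
  split_ifs at * with hp
  · exact ⟨h₁.1, hadd ▸ dvd_add h₁.2 h₂.2⟩
  · exact hadd ▸ dvd_add h₁ h₂

theorem IsCarterPaynePair.apply_eq_of_lt {e p : ℕ} {lam mu : ℕ → ℕ} {a z γ i : ℕ}
    (h : IsCarterPaynePair e p lam mu a z γ) (hzi : z < i) : mu i = lam i :=
  h.2.2.2.2.2.2.1 i (by have := h.2.2.2.1; omega) hzi.ne'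

theorem IsCarterPaynePair.trans {e p : ℕ} {lam sigma mu : ℕ → ℕ} {a y z γ : ℕ}
    (h₁ : IsCarterPaynePair e p lam sigma a y γ) (h₂ : IsCarterPaynePair e p sigma mu y z γ) :
    IsCarterPaynePair e p lam mu a z γ := by
  have hσz : sigma z = lam z := h₁.apply_eq_of_lt h₂.2.2.2.1
  obtain ⟨he, hγ, ha, hay, hσa, hσy, hσ, hdiv₁⟩ := h₁
  obtain ⟨-, -, -, hyz, hμy, hμz, hμ, hdiv₂⟩ := h₂
  have hμa : mu a = sigma a := hμ a (by omega) (by omega)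
  refine ⟨he, hγ, ha, hay.trans hyz, by omega, by omega, fun i hia hiz => ?_,
    hdiv₁.of_hook_eq_add hdiv₂ (carterPayneHook_trans hσy hσz)⟩
  by_cases hiy : i = y
  · subst hiy
    omega
  · rw [hμ i hiy hiz, hσ i hia hiy]

theorem IsSeparated.trans {lam sigma : ℕ → ℕ} {a y z γ : ℕ}
    (h₁ : IsSeparated lam a y γ) (h₂ : IsSeparated sigma y z γ)
    (hagree : ∀ i, y < i → sigma i = lam i) :
    IsSeparated lam a z γ := by
  intro r har hrz
  rcases le_or_gt r y with hry | hyr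
  · exact h₁ r har hry
  · simpa only [hagree r hyr, hagree (r + 1) (by omega)] using h₂ r hyr hrz

theorem carter_payne_pair_comp_general (e p : ℕ)
    (lam mu sigma : ℕ → ℕ)
    (a y z γ : ℕ)
    (h1 : IsCarterPaynePair e p lam sigma a y γ) (h1s : IsSeparated lam a y γ)
    (h2 : IsCarterPaynePair e p sigma mu y z γ) (h2s : IsSeparated sigma y z γ) :
    IsCarterPaynePair e p lam mu a z γ ∧ IsSeparated lam a z γ :=
  ⟨h1.trans h2, h1s.trans h2s fun _ hyi => h1.apply_eq_of_lt hyi⟩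

/-- the combinatorial content of Theorem 1.2 of the paper: two separated
Carter-Payne pairs `(λ,σ)` with parameters `(a,y,γ)` and `(σ,μ)` with parameters
`(y,z,γ)` compose to a separated Carter-Payne pair `(λ,μ)` with parameters `(a,z,γ)`. -/
theorem carter_payne_pair_comp (e p n : ℕ) (hp : p = 0 ∨ p.Prime)
    (lam mu sigma : ℕ → ℕ)
    (hlam : ∀ i, 1 ≤ i → lam (i + 1) ≤ lam i)
    (hmu : ∀ i, 1 ≤ i → mu (i + 1) ≤ mu i)
    (hsigma : ∀ i, 1 ≤ i → sigma (i + 1) ≤ sigma i)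
    (hlamn : ∑ i ∈ Finset.Icc 1 n, lam i = n) (hlam0 : ∀ i, n < i → lam i = 0)
    (hmun : ∑ i ∈ Finset.Icc 1 n, mu i = n) (hmu0 : ∀ i, n < i → mu i = 0)
    (hsigman : ∑ i ∈ Finset.Icc 1 n, sigma i = n) (hsigma0 : ∀ i, n < i → sigma i = 0)
    (a y z γ : ℕ) (hay : a < y) (hyz : y < z) (hγ : 0 < γ)
    (h1 : IsCarterPaynePair e p lam sigma a y γ) (h1s : IsSeparated lam a y γ)
    (h2 : IsCarterPaynePair e p sigma mu y z γ) (h2s : IsSeparated sigma y z γ) :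
    IsCarterPaynePair e p lam mu a z γ ∧ IsSeparated lam a z γ :=
  carter_payne_pair_comp_general e p lam mu sigma a y z γ h1 h1s h2 h2s
end

section
/- Let p be a prime and γ a positive integer. Write γ = γ*·e + γ' with 0 ≤ γ' < e for an integer e > 1, and let ℓ_p(γ*) be the smallest positive integer with p^{ℓ_p(γ*)} > γ*. Suppose C is a negative integer with C ≡ 0 (mod e·p^{ℓ_p(γ*)}). Then for every integer j with 0 ≤ j ≤ γ − 1, ν_{e,p}(C − j) ≤ ν_{e,p}(C) and moreover for 1 ≤ X ≤ γ, ν_{e,p}(X) < ν_{e,p}(C), where ν_{e,p}(x) = 0 if e ∤ x and ν_{e,p}(x) = 1 + ν_p(x/e) otherwise. -/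
theorem padicValInt_sub_of_lt {p : ℕ} (hp : p ≠ 1) {a b : ℤ} (hb : b ≠ 0)
    (hab : padicValInt p b < padicValInt p a) : padicValInt p (a - b) = padicValInt p b := by
  have pow_dvd_iff (n : ℕ) (z : ℤ) (hz : z ≠ 0) : (p : ℤ) ^ n ∣ z ↔ n ≤ padicValInt p z := by
    simp [padicValInt_dvd_iff_of_ne_one hp, hz]
  have ha : a ≠ 0 := by rintro rfl; simp at hab
  have hab' : a - b ≠ 0 := sub_ne_zero.mpr (by rintro rfl; exact hab.false)
  apply le_antisymm
  · by_contra! hlt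
    have hb' : (p : ℤ) ^ (padicValInt p b + 1) ∣ b := by
      simpa using dvd_sub ((pow_dvd_iff _ a ha).mpr hab) ((pow_dvd_iff _ _ hab').mpr hlt)
    exact absurd ((pow_dvd_iff _ b hb).mp hb') (by omega)
  · exact (pow_dvd_iff _ _ hab').mp <|
      dvd_sub ((pow_dvd_iff _ a ha).mpr hab.le) ((pow_dvd_iff _ b hb).mpr le_rfl)

section nuep

variable {e p : ℕ}

theorem nuep_mul_left (he : e ≠ 0) (a : ℤ) : nuep e p (e * a) = 1 + padicValInt p a := by
  simp [nuep, he]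

theorem nuep_of_not_dvd {l : ℤ} (h : ¬ (e : ℤ) ∣ l) : nuep e p l = 0 := if_neg h

theorem nuep_sub_of_lt (hp : p ≠ 1) {x y : ℤ} (hy : y ≠ 0) (h : nuep e p y < nuep e p x) :
    nuep e p (x - y) = nuep e p y := by
  have hx : (e : ℤ) ∣ x := by
    by_contra hx
    simp [nuep_of_not_dvd hx] at h
  by_cases hey : (e : ℤ) ∣ y
  · obtain ⟨a, rfl⟩ := hx
    obtain ⟨b, rfl⟩ := hey
    have he : e ≠ 0 := by rintro rfl; simp at hy
    have hb : b ≠ 0 := by rintro rfl; simp at hy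
    rw [nuep_mul_left he, nuep_mul_left he] at h
    rw [← mul_sub, nuep_mul_left he, nuep_mul_left he, padicValInt_sub_of_lt hp hb (by omega)]
  · rw [nuep_of_not_dvd hey, nuep_of_not_dvd fun h => hey (by simpa using dvd_sub hx h)]

theorem nuep_natCast_le_log (X : ℕ) : nuep e p X ≤ Nat.log p (X / e) + 1 := by
  by_cases h : (e : ℤ) ∣ X
  · have hdiv : (X : ℤ) / e = ((X / e : ℕ) : ℤ) := (Int.natCast_div X e).symm
    rw [nuep, if_pos h, hdiv, padicValInt.of_nat, add_comm]
    exact Nat.add_le_add_right (padicValNat_le_nat_log _) 1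
  · simp [nuep_of_not_dvd h]

theorem le_nuep_of_mul_pow_dvd (hp : p ≠ 1) {n : ℕ} {C : ℤ} (hC : C ≠ 0)
    (h : (e : ℤ) * (p : ℤ) ^ n ∣ C) : n + 1 ≤ nuep e p C := by
  obtain ⟨k, rfl⟩ := h
  have he : e ≠ 0 := by rintro rfl; simp at hC
  have hk : (p : ℤ) ^ n * k ≠ 0 := by rintro h; simp [mul_assoc, h] at hC
  rw [mul_assoc, nuep_mul_left he, add_comm]
  have := (padicValInt_dvd_iff_of_ne_one hp n _).mp (dvd_mul_right _ k)
  simp only [hk, false_or] at this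
  omega

end nuep

/-- `Nat.log p (γ / e) + 1` is `ℓ_p(γ*)`, the least `l` with `γ* = ⌊γ/e⌋ < p^l`. -/
theorem nuep_bounds_general (p e : ℕ) (hp : p.Prime)
    (γ : ℕ) (C : ℤ) (hC : C < 0)
    (hdvd : ((e : ℤ) * (p : ℤ) ^ (Nat.log p (γ / e) + 1)) ∣ C) :
    (∀ j : ℕ, j ≤ γ - 1 → nuep e p (C - j) ≤ nuep e p C) ∧
      (∀ X : ℕ, 1 ≤ X → X ≤ γ → nuep e p (X : ℤ) < nuep e p C) := by
  have hsmall (X : ℕ) (hX : X ≤ γ) : nuep e p X < nuep e p C :=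
    calc nuep e p X ≤ Nat.log p (X / e) + 1 := nuep_natCast_le_log X
      _ ≤ Nat.log p (γ / e) + 1 := by gcongr
      _ < Nat.log p (γ / e) + 1 + 1 := lt_add_one _
      _ ≤ nuep e p C := le_nuep_of_mul_pow_dvd hp.ne_one hC.ne hdvd
  refine ⟨fun j hj => ?_, fun X _ hX => hsmall X hX⟩
  rcases Nat.eq_zero_or_pos j with rfl | hj0
  · simp
  · have hjγ : j ≤ γ := by omega
    rw [nuep_sub_of_lt hp.ne_one (by exact_mod_cast hj0.ne') (hsmall j hjγ)]
    exact (hsmall j hjγ).le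

/-- the arithmetic step in the final claim of Lemma 3.16 of the paper.
Here `Nat.log p (γ/e) + 1 = ℓ_p(γ*)` is the smallest positive integer `l` with
`p^l > γ* = ⌊γ/e⌋`. -/
theorem nuep_bounds (p e : ℕ) (hp : p.Prime) (he : 1 < e)
    (γ : ℕ) (hγ : 0 < γ) (C : ℤ) (hC : C < 0)
    (hdvd : ((e : ℤ) * (p : ℤ) ^ (Nat.log p (γ / e) + 1)) ∣ C) :
    (∀ j : ℕ, j ≤ γ - 1 → nuep e p (C - j) ≤ nuep e p C) ∧
      (∀ X : ℕ, 1 ≤ X → X ≤ γ → nuep e p (X : ℤ) < nuep e p C) :=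
  nuep_bounds_general p e hp γ C hC hdvd
end
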